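/- arXiv:1411.4323 — 3 statements merged into one kernel-verified Lean document; each statement's English description precedes it below -/
import Mathlib

section
/- For all x > 0, the function p(x) = (sinh x - x)/(x (cosh x - 1)) satisfies 0 < p(x) < 1/3. -/
open Real in
private lemma aux1 (x : ℝ) (hx : 0 < x) : Real.sinh x < x * Real.cosh x := by
  have h : StrictMonoOn (fun y : ℝ => y * Real.cosh y - Real.sinh y) (Set.Ici 0) := by
    apply strictMonoOn_of_deriv_pos (convex_Ici 0) (by fun_prop)
    intro y hy
    rw [interior_Ici, Set.mem_Ioi] at hy
    have : HasDerivAt (fun y : ℝ => y * Real.cosh y - Real.sinh y)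
        (1 * Real.cosh y + y * Real.sinh y - Real.cosh y) y := by
      exact ((hasDerivAt_id y).mul (Real.hasDerivAt_cosh y)).sub (Real.hasDerivAt_sinh y)
    rw [this.deriv]
    have := Real.sinh_pos_iff.mpr hy
    nlinarith
  have := h (Set.self_mem_Ici) (Set.mem_Ici.mpr hx.le) hx
  simp at this
  linarith

open Real in
private lemma aux2 (x : ℝ) (hx : 0 < x) : 2 * Real.cosh x - 2 < x * Real.sinh x := by
  have h : StrictMonoOn (fun y : ℝ => y * Real.sinh y - 2 * Real.cosh y) (Set.Ici 0) := by
    apply strictMonoOn_of_deriv_pos (convex_Ici 0) (by fun_prop)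
    intro y hy
    rw [interior_Ici, Set.mem_Ioi] at hy
    have : HasDerivAt (fun y : ℝ => y * Real.sinh y - 2 * Real.cosh y)
        (1 * Real.sinh y + y * Real.cosh y - 2 * Real.sinh y) y := by
      exact ((hasDerivAt_id y).mul (Real.hasDerivAt_sinh y)).sub
        ((Real.hasDerivAt_cosh y).const_mul 2)
    rw [this.deriv]
    have := aux1 y hy
    linarith
  have := h (Set.self_mem_Ici) (Set.mem_Ici.mpr hx.le) hx
  simp at this
  linarith

open Real in
private lemma aux3 (x : ℝ) (hx : 0 < x) : 3 * Real.sinh x < x * Real.cosh x + 2 * x := by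
  have h : StrictMonoOn (fun y : ℝ => y * Real.cosh y + 2 * y - 3 * Real.sinh y) (Set.Ici 0) := by
    apply strictMonoOn_of_deriv_pos (convex_Ici 0) (by fun_prop)
    intro y hy
    rw [interior_Ici, Set.mem_Ioi] at hy
    have : HasDerivAt (fun y : ℝ => y * Real.cosh y + 2 * y - 3 * Real.sinh y)
        (1 * Real.cosh y + y * Real.sinh y + 2 * 1 - 3 * Real.cosh y) y := by
      exact (((hasDerivAt_id y).mul (Real.hasDerivAt_cosh y)).add
        ((hasDerivAt_id y).const_mul 2)).sub ((Real.hasDerivAt_sinh y).const_mul 3)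
    rw [this.deriv]
    have := aux2 y hy
    linarith
  have := h (Set.self_mem_Ici) (Set.mem_Ici.mpr hx.le) hx
  simp at this
  linarith

theorem stmt_1 (x : ℝ) (hx : 0 < x) :
    0 < (Real.sinh x - x) / (x * (Real.cosh x - 1)) ∧
    (Real.sinh x - x) / (x * (Real.cosh x - 1)) < 1 / 3 := by
  have h1 : x < Real.sinh x := Real.self_lt_sinh_iff.mpr hx
  have h2 : 1 < Real.cosh x := Real.one_lt_cosh.mpr hx.ne'
  have hd : 0 < x * (Real.cosh x - 1) := mul_pos hx (by linarith)
  constructor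
  · exact div_pos (by linarith) hd
  · rw [div_lt_div_iff₀ hd (by norm_num)]
    have := aux3 x hx
    nlinarith
end

section
/- For all β > 0 and h > 0, sinh(β h) - β h ≤ (β h / 3)(cosh(β h) - 1). -/
open Real Set

/-
Writing x = β h, the difference x (cosh x - 1) - 3 (sinh x - x) vanishes at 0, and so do its
derivative x sinh x - 2 (cosh x - 1) and second derivative x cosh x - sinh x, while the third
derivative x sinh x is nonnegative on [0, ∞). Three monotonicity steps give the inequality.
-/

lemma le_of_hasDerivAt_nonneg {f f' : ℝ → ℝ} {a x : ℝ} (hf : ∀ y, HasDerivAt f (f' y) y)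
    (hf' : ∀ y, a ≤ y → 0 ≤ f' y) (hax : a ≤ x) : f a ≤ f x :=
  monotoneOn_of_hasDerivWithinAt_nonneg (convex_Ici a)
    (fun y _ ↦ (hf y).continuousAt.continuousWithinAt)
    (fun y _ ↦ (hf y).hasDerivWithinAt)
    (fun y hy ↦ hf' y (interior_subset hy)) self_mem_Ici hax hax

lemma sinh_le_mul_cosh {x : ℝ} (hx : 0 ≤ x) : sinh x ≤ x * cosh x := by
  have hderiv (y : ℝ) : HasDerivAt (fun y ↦ y * cosh y - sinh y) (y * sinh y) y :=
    (((hasDerivAt_id' y).mul (hasDerivAt_cosh y)).sub (hasDerivAt_sinh y)).congr_deriv (by ring)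
  have hmono := le_of_hasDerivAt_nonneg hderiv
    (fun y hy ↦ mul_nonneg hy (sinh_nonneg_iff.mpr hy)) hx
  simp only [zero_mul, sinh_zero, sub_zero] at hmono
  linarith

lemma two_mul_cosh_sub_one_le_mul_sinh {x : ℝ} (hx : 0 ≤ x) :
    2 * (cosh x - 1) ≤ x * sinh x := by
  have hderiv (y : ℝ) :
      HasDerivAt (fun y ↦ y * sinh y - 2 * (cosh y - 1)) (y * cosh y - sinh y) y :=
    (((hasDerivAt_id' y).mul (hasDerivAt_sinh y)).sub
      (((hasDerivAt_cosh y).sub_const 1).const_mul 2)).congr_deriv (by ring)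
  have hmono := le_of_hasDerivAt_nonneg hderiv
    (fun y hy ↦ sub_nonneg.mpr (sinh_le_mul_cosh hy)) hx
  simp only [zero_mul, cosh_zero, sub_self, mul_zero] at hmono
  linarith

lemma three_mul_sinh_sub_self_le {x : ℝ} (hx : 0 ≤ x) :
    3 * (sinh x - x) ≤ x * (cosh x - 1) := by
  have hderiv (y : ℝ) : HasDerivAt (fun y ↦ y * (cosh y - 1) - 3 * (sinh y - y))
      (y * sinh y - 2 * (cosh y - 1)) y :=
    (((hasDerivAt_id' y).mul ((hasDerivAt_cosh y).sub_const 1)).sub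
      (((hasDerivAt_sinh y).sub (hasDerivAt_id' y)).const_mul 3)).congr_deriv (by ring)
  have hmono := le_of_hasDerivAt_nonneg hderiv
    (fun y hy ↦ sub_nonneg.mpr (two_mul_cosh_sub_one_le_mul_sinh hy)) hx
  simp only [zero_mul, sinh_zero, sub_self, mul_zero] at hmono
  linarith

theorem stmt_7 (β h : ℝ) (hβ : 0 < β) (hh : 0 < h) :
    Real.sinh (β * h) - β * h ≤ (β * h / 3) * (Real.cosh (β * h) - 1) := by
  have := three_mul_sinh_sub_self_le (mul_pos hβ hh).le
  linarith
end

section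
/- Let F : R^{N+1} → R^{N+1} be continuously differentiable and suppose that for every w ∈ R^{N+1} the Fréchet derivative F'(w) is invertible with ‖(F'(w))^{-1}‖ ≤ 1/m for a fixed constant m > 0 (operator norm induced by the max norm). Then for all u, v ∈ R^{N+1}, ‖u - v‖ ≤ (1/m) ‖F(u) - F(v)‖. In particular F is injective. -/
/-!
Hadamard's global inverse argument, by path lifting. By the inverse function theorem `f` is a
local homeomorphism, and a lift `γ` of the segment from `f u` to `b` has velocity
`(f' (γ t))⁻¹ (b - f u)`, hence is `C ‖b - f u‖`-Lipschitz. This bound keeps lifts in a compact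
ball, so a lift can always be continued past the supremum of its interval of existence and thus
exists on all of `[0, 1]`. Lifting the segments from `f w` to `f v` for all starting points `w` at
once, the homotopy lifting property of separated local homeomorphisms makes the endpoint
continuous in `w`; as it lies in the discrete fiber over `f v`, it is constant, equal to `v`. The
Lipschitz bound along the lift starting at `u` then gives `‖u - v‖ ≤ C ‖f u - f v‖`.
-/

open Set Metric Filter Topology AffineMap

section SegmentLift

variable {E E' : Type*} [NormedAddCommGroup E] [NormedAddCommGroup E'] [NormedSpace ℝ E']

def IsSegmentLiftOn (f : E → E') (y₀ y₁ : E') (γ : ℝ → E) (c : ℝ) : Prop :=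
  ContinuousOn γ (Icc 0 c) ∧ ∀ t ∈ Icc 0 c, f (γ t) = lineMap y₀ y₁ t

variable {y₀ y₁ : E'} {γ : ℝ → E} {c : ℝ}

theorem IsSegmentLiftOn.exists_extend_of_mem_source (φ : OpenPartialHomeomorph E E')
    (hγ : IsSegmentLiftOn φ y₀ y₁ γ c) (hc : 0 ≤ c) (hsrc : γ c ∈ φ.source) {c' : ℝ}
    (hcc' : c ≤ c') (htgt : ∀ t ∈ Icc c c', lineMap y₀ y₁ t ∈ φ.target) :
    ∃ Γ : ℝ → E, Γ 0 = γ 0 ∧ IsSegmentLiftOn φ y₀ y₁ Γ c' := by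
  have hγc : φ.symm (lineMap y₀ y₁ c) = γ c := by
    rw [← hγ.2 c ⟨hc, le_rfl⟩, φ.left_inv hsrc]
  -- The first summand freezes at time `c` and the second vanishes before it, so no gluing lemma
  -- is needed for continuity.
  refine ⟨fun t => γ (min t c) + (φ.symm (lineMap y₀ y₁ (max t c)) - γ c), ?_, ?_, ?_⟩
  · simp [min_eq_left hc, max_eq_right hc, hγc]
  · refine (hγ.1.comp (continuous_id.min continuous_const).continuousOn ?_).add
      ((φ.continuousOn_symm.comp ((lineMap_continuous.comp
        (continuous_id.max continuous_const)).continuousOn) ?_).sub continuousOn_const)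
    · exact fun t ht => ⟨le_min ht.1 hc, min_le_right _ _⟩
    · exact fun t ht => htgt _ ⟨le_max_right _ _, max_le ht.2 hcc'⟩
  · intro t ht
    rcases le_total t c with htc | hct
    · simpa [min_eq_left htc, max_eq_right htc, hγc] using hγ.2 t ⟨ht.1, htc⟩
    · simp only [min_eq_right hct, max_eq_left hct, add_sub_cancel]
      exact φ.right_inv (htgt t ⟨hct, ht.2⟩)

variable [NormedSpace ℝ E]

theorem isLocalHomeomorph_of_hasStrictFDerivAt [CompleteSpace E] {f : E → E'}
    {f' : E → E ≃L[ℝ] E'} (hf : ∀ x, HasStrictFDerivAt f (f' x : E →L[ℝ] E') x) :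
    IsLocalHomeomorph f := fun x =>
  ⟨(hf x).toOpenPartialHomeomorph f, (hf x).mem_toOpenPartialHomeomorph_source,
    ((hf x).toOpenPartialHomeomorph_coe).symm⟩

variable {f : E → E'} {f' : E → E ≃L[ℝ] E'} {C : ℝ}

theorem IsSegmentLiftOn.hasDerivWithinAt (hf : ∀ x, HasFDerivAt f (f' x : E →L[ℝ] E') x)
    (hloc : IsLocalHomeomorph f) (hγ : IsSegmentLiftOn f y₀ y₁ γ c) {t : ℝ}
    (ht : t ∈ Icc 0 c) :
    HasDerivWithinAt γ ((f' (γ t)).symm (y₁ - y₀)) (Icc 0 c) t := by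
  obtain ⟨φ, hsrc, rfl⟩ := hloc (γ t)
  have hsymm : HasFDerivAt φ.symm ((f' (γ t)).symm : E' →L[ℝ] E) (lineMap y₀ y₁ t) := by
    rw [← hγ.2 t ht]
    exact φ.hasFDerivAt_symm (φ.map_source hsrc) (by rw [φ.left_inv hsrc]; exact hf _)
  have hγ_eq : ∀ s ∈ Icc 0 c, γ s ∈ φ.source → γ s = φ.symm (lineMap y₀ y₁ s) :=
    fun s hs hsrc' => by rw [← hγ.2 s hs, φ.left_inv hsrc']
  refine (hsymm.comp_hasDerivWithinAt t hasDerivWithinAt_lineMap).congr_of_eventuallyEq ?_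
    (hγ_eq t ht hsrc)
  filter_upwards [(hγ.1 t ht).preimage_mem_nhdsWithin (φ.open_source.mem_nhds hsrc),
    self_mem_nhdsWithin] with s hs hsI using hγ_eq s hsI hs

theorem IsSegmentLiftOn.norm_sub_le (hf : ∀ x, HasFDerivAt f (f' x : E →L[ℝ] E') x)
    (hC : ∀ x, ‖((f' x).symm : E' →L[ℝ] E)‖ ≤ C) (hloc : IsLocalHomeomorph f)
    (hγ : IsSegmentLiftOn f y₀ y₁ γ c) {s t : ℝ} (hs : 0 ≤ s) (hst : s ≤ t) (ht : t ≤ c) :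
    ‖γ t - γ s‖ ≤ C * ‖y₁ - y₀‖ * (t - s) := by
  have hsub : Icc s t ⊆ Icc 0 c := Icc_subset_Icc hs ht
  refine norm_image_sub_le_of_norm_deriv_le_segment' (f' := fun x => (f' (γ x)).symm (y₁ - y₀))
    (fun x hx => (hγ.hasDerivWithinAt hf hloc (hsub hx)).mono hsub)
    (fun x _ => ContinuousLinearMap.le_of_opNorm_le _ (hC _) _) t ⟨hst, le_rfl⟩

theorem exists_isSegmentLiftOn_of_tendsto [ProperSpace E]
    (hf : ∀ x, HasFDerivAt f (f' x : E →L[ℝ] E') x)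
    (hC : ∀ x, ‖((f' x).symm : E' →L[ℝ] E)‖ ≤ C) (hloc : IsLocalHomeomorph f) {x₀ : E} {y₁ : E'}
    {c : ℕ → ℝ} {T : ℝ} (hcT : Tendsto c atTop (𝓝 T)) (hc : ∀ n, c n ∈ Icc 0 T)
    {γ : ℕ → ℝ → E} (hγ0 : ∀ n, γ n 0 = x₀) (hγ : ∀ n, IsSegmentLiftOn f (f x₀) y₁ (γ n) (c n)) :
    ∃ δ > 0, ∀ c' ∈ Icc T (T + δ), ∃ Γ : ℝ → E, Γ 0 = x₀ ∧ IsSegmentLiftOn f (f x₀) y₁ Γ c' := by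
  have hR : ∀ n, γ n (c n) ∈ closedBall x₀ (C * ‖y₁ - f x₀‖ * T) := fun n => by
    have := (hγ n).norm_sub_le hf hC hloc le_rfl (hc n).1 le_rfl
    rw [hγ0, sub_zero] at this
    have hC0 : 0 ≤ C * ‖y₁ - f x₀‖ := mul_nonneg ((norm_nonneg _).trans (hC x₀)) (norm_nonneg _)
    rw [mem_closedBall, dist_eq_norm]
    exact this.trans (mul_le_mul_of_nonneg_left (hc n).2 hC0)
  obtain ⟨z, -, ψ, hψ, hz⟩ := (isCompact_closedBall x₀ _).tendsto_subseq hR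
  have hcψ : Tendsto (c ∘ ψ) atTop (𝓝 T) := hcT.comp hψ.tendsto_atTop
  have hfz : f z = lineMap (f x₀) y₁ T :=
    tendsto_nhds_unique ((hloc.continuous.tendsto z).comp hz) <|
      ((lineMap_continuous.tendsto T).comp hcψ).congr fun n =>
        ((hγ (ψ n)).2 _ ⟨(hc _).1, le_rfl⟩).symm
  obtain ⟨φ, hzφ, rfl⟩ := hloc z
  obtain ⟨δ, hδ, hball⟩ := Metric.mem_nhds_iff.1 <|
    lineMap_continuous.continuousAt.preimage_mem_nhds
      (φ.open_target.mem_nhds (hfz ▸ φ.map_source hzφ))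
  obtain ⟨n, hsrc, hnear⟩ := ((hz.eventually (φ.open_source.mem_nhds hzφ)).and
    ((tendsto_order.1 hcψ).1 (T - δ / 2) (by linarith))).exists
  refine ⟨δ / 2, half_pos hδ, fun c' hc' => ?_⟩
  obtain ⟨Γ, hΓ0, hΓ⟩ := (hγ (ψ n)).exists_extend_of_mem_source φ (hc _).1 hsrc
    ((hc _).2.trans hc'.1) fun t ⟨htc, htc'⟩ => hball <| by
      have hcn : T - δ / 2 < c (ψ n) := hnear
      rw [mem_ball, Real.dist_eq, abs_lt]
      constructor <;> linarith [hc'.2]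
  exact ⟨Γ, hΓ0.trans (hγ0 _), hΓ⟩

theorem exists_isSegmentLiftOn [ProperSpace E] (hf : ∀ x, HasFDerivAt f (f' x : E →L[ℝ] E') x)
    (hC : ∀ x, ‖((f' x).symm : E' →L[ℝ] E)‖ ≤ C) (hloc : IsLocalHomeomorph f) (x₀ : E) (y₁ : E') :
    ∃ γ : ℝ → E, γ 0 = x₀ ∧ IsSegmentLiftOn f (f x₀) y₁ γ 1 := by
  set S : Set ℝ := {c | c ∈ Icc 0 1 ∧ ∃ γ : ℝ → E, γ 0 = x₀ ∧ IsSegmentLiftOn f (f x₀) y₁ γ c}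
  have h0S : (0 : ℝ) ∈ S := ⟨⟨le_rfl, zero_le_one⟩, fun _ => x₀, rfl, continuousOn_const,
    fun t ht => by rw [le_antisymm ht.2 ht.1, lineMap_apply_zero]⟩
  have hbdd : BddAbove S := ⟨1, fun c hc => hc.1.2⟩
  have hST : ∀ c ∈ S, c ≤ sSup S := fun c hc => le_csSup hbdd hc
  obtain ⟨c, -, hcT, hcS⟩ := exists_seq_tendsto_sSup ⟨0, h0S⟩ hbdd
  choose hc γ hγ0 hγ using hcS
  obtain ⟨δ, hδ, hext⟩ := exists_isSegmentLiftOn_of_tendsto hf hC hloc hcT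
    (fun n => ⟨(hc n).1, hST _ ⟨hc n, γ n, hγ0 n, hγ n⟩⟩) hγ0 hγ
  have hT1 : 1 ≤ sSup S + δ := by
    by_contra! h
    obtain ⟨Γ, hΓ0, hΓ⟩ := hext _ ⟨le_add_of_nonneg_right hδ.le, le_rfl⟩
    linarith [hST _ ⟨⟨by linarith [hST 0 h0S], h.le⟩, Γ, hΓ0, hΓ⟩]
  exact hext 1 ⟨csSup_le ⟨0, h0S⟩ fun c hc => hc.1.2, hT1⟩

open unitInterval in
theorem exists_isSegmentLiftOn_apply_one_eq [ProperSpace E]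
    (hf : ∀ x, HasFDerivAt f (f' x : E →L[ℝ] E') x)
    (hC : ∀ x, ‖((f' x).symm : E' →L[ℝ] E)‖ ≤ C) (hloc : IsLocalHomeomorph f) (u v : E) :
    ∃ γ : ℝ → E, γ 0 = u ∧ IsSegmentLiftOn f (f u) (f v) γ 1 ∧ γ 1 = v := by
  choose Γ hΓ0 hΓ using fun w => exists_isSegmentLiftOn hf hC hloc w (f v)
  have hsep : IsSeparatedMap f := T2Space.isSeparatedMap f
  have hΓI : ∀ w, Continuous fun t : I => Γ w t := fun w =>
    (hΓ w).1.comp_continuous continuous_subtype_val fun t => t.2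
  have hΓf : ∀ w, ∀ t : I, f (Γ w t) = lineMap (f w) (f v) (t : ℝ) := fun w t => (hΓ w).2 t t.2
  have hcont : Continuous fun p : I × E => Γ p.2 p.1 :=
    hloc.continuous_lift hsep ⟨fun p : I × E => lineMap (f p.2) (f v) (p.1 : ℝ),
      (hloc.continuous.comp continuous_snd).lineMap continuous_const
        (continuous_subtype_val.comp continuous_fst)⟩
      (funext fun p => hΓf p.2 p.1) (by simpa [hΓ0] using continuous_id') hΓI
  have hv : Γ v 1 = v := by
    simpa [hΓ0] using hsep.const_of_comp hloc.isLocallyInjective (hΓI v)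
      (fun a a' => by simp [hΓf]) 1 0
  have hΓ1 : ∀ w, f (Γ w 1) = f v := fun w => by
    simpa using (hΓ w).2 1 ⟨zero_le_one, le_rfl⟩
  have hu : Γ u 1 = Γ v 1 := hsep.const_of_comp hloc.isLocallyInjective (g := fun w => Γ w 1)
    (hcont.comp (Continuous.prodMk_right (1 : I))) (fun a a' => (hΓ1 a).trans (hΓ1 a').symm) u v
  exact ⟨Γ u, hΓ0 u, hΓ u, hu.trans hv⟩

theorem norm_sub_le_mul_norm_sub_of_norm_symm_fderiv_le [ProperSpace E]
    (hf : ∀ x, HasStrictFDerivAt f (f' x : E →L[ℝ] E') x)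
    (hC : ∀ x, ‖((f' x).symm : E' →L[ℝ] E)‖ ≤ C) (u v : E) :
    ‖u - v‖ ≤ C * ‖f u - f v‖ := by
  have hloc := isLocalHomeomorph_of_hasStrictFDerivAt hf
  have hf' := fun x => (hf x).hasFDerivAt
  obtain ⟨γ, hγ0, hγ, hγ1⟩ := exists_isSegmentLiftOn_apply_one_eq hf' hC hloc u v
  simpa [hγ0, hγ1, norm_sub_rev] using hγ.norm_sub_le hf' hC hloc le_rfl zero_le_one le_rfl

end SegmentLift

theorem stmt_12_general (N : ℕ) (m : ℝ)
    (F : (Fin (N + 1) → ℝ) → (Fin (N + 1) → ℝ)) (hF : ContDiff ℝ 1 F)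
    (hinv : ∀ w : Fin (N + 1) → ℝ,
      ∃ G : (Fin (N + 1) → ℝ) →L[ℝ] (Fin (N + 1) → ℝ),
        G.comp (fderiv ℝ F w) = ContinuousLinearMap.id ℝ (Fin (N + 1) → ℝ) ∧
        (fderiv ℝ F w).comp G = ContinuousLinearMap.id ℝ (Fin (N + 1) → ℝ) ∧
        ‖G‖ ≤ 1 / m) :
    (∀ u v : Fin (N + 1) → ℝ, ‖u - v‖ ≤ (1 / m) * ‖F u - F v‖) ∧
    Function.Injective F := by
  choose G hGF hFG hG using hinv
  have hbound := norm_sub_le_mul_norm_sub_of_norm_symm_fderiv_le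
    (f' := fun w => .equivOfInverse' (fderiv ℝ F w) (G w) (hFG w) (hGF w))
    (fun w => hF.contDiffAt.hasStrictFDerivAt one_ne_zero) hG
  refine ⟨hbound, fun u v huv => ?_⟩
  simpa [huv, sub_eq_zero] using hbound u v

theorem stmt_12 (N : ℕ) (m : ℝ) (hm : 0 < m)
    (F : (Fin (N + 1) → ℝ) → (Fin (N + 1) → ℝ)) (hF : ContDiff ℝ 1 F)
    (hinv : ∀ w : Fin (N + 1) → ℝ,
      ∃ G : (Fin (N + 1) → ℝ) →L[ℝ] (Fin (N + 1) → ℝ),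
        G.comp (fderiv ℝ F w) = ContinuousLinearMap.id ℝ (Fin (N + 1) → ℝ) ∧
        (fderiv ℝ F w).comp G = ContinuousLinearMap.id ℝ (Fin (N + 1) → ℝ) ∧
        ‖G‖ ≤ 1 / m) :
    (∀ u v : Fin (N + 1) → ℝ, ‖u - v‖ ≤ (1 / m) * ‖F u - F v‖) ∧
    Function.Injective F :=
  stmt_12_general N m F hF hinv
end
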